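/- arXiv:2110.07676 — 5 statements merged into one kernel-verified Lean document; each statement's English description precedes it below -/
import Mathlib

section
/- Let H be a real inner product space, N a positive integer, and y₁, …, y_N ∈ H snapshots with Gram matrix K_{ij} = ⟪y_i, y_j⟫. Suppose v₁, …, v_N form an orthonormal basis of ℝ^N consisting of eigenvectors of K, K v_k = μ_k v_k with μ_k > 0 for all k, and define φ_k = μ_k^{−1/2} Σ_{j=1}^N (v_k)_j y_j. Then for every integer N_pod with 1 ≤ N_pod ≤ N, Σ_{i=1}^N ‖y_i − Σ_{k=1}^{N_pod} ⟪y_i, φ_k⟫ φ_k‖² = Σ_{k=N_pod+1}^N μ_k. -/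
open scoped RealInnerProductSpace

/-- POD error formula (Proposition 3.2, eq. (3.6)): the total squared projection error of the
snapshots onto the first `N_pod` POD basis vectors equals the sum of the remaining
eigenvalues: `∑ i, ‖y i − ∑_{k < N_pod} ⟪y i, φ k⟫ • φ k‖² = ∑_{k ≥ N_pod} μ k`. -/
theorem stmt_6 {H : Type*} [NormedAddCommGroup H] [InnerProductSpace ℝ H]
    (N : ℕ) (hN : 0 < N) (y : Fin N → H)
    (K : Matrix (Fin N) (Fin N) ℝ) (hK : ∀ i j, K i j = ⟪y i, y j⟫)
    (v : Fin N → EuclideanSpace ℝ (Fin N)) (hortho : Orthonormal ℝ v)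
    (μ : Fin N → ℝ) (hμ : ∀ k, 0 < μ k)
    (heig : ∀ k i, ∑ j, K i j * v k j = μ k * v k i)
    (φ : Fin N → H)
    (hφ : ∀ k, φ k = (Real.sqrt (μ k))⁻¹ • ∑ j, (v k j) • y j)
    (Npod : ℕ) (hNpod1 : 1 ≤ Npod) (hNpod2 : Npod ≤ N) :
    ∑ i, ‖y i - ∑ k ∈ Finset.univ.filter (fun k : Fin N => (k : ℕ) < Npod),
        ⟪y i, φ k⟫ • φ k‖ ^ 2
      = ∑ k ∈ Finset.univ.filter (fun k : Fin N => Npod ≤ (k : ℕ)), μ k := by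
  have hvo : ∀ k l, ∑ i, v k i * v l i = if k = l then (1:ℝ) else 0 := by
    intro k l
    have := orthonormal_iff_ite.mp hortho k l
    simpa [PiLp.inner_apply, RCLike.inner_apply, mul_comm] using this
  have hsq : ∀ k, Real.sqrt (μ k) * Real.sqrt (μ k) = μ k := fun k => Real.mul_self_sqrt (hμ k).le
  have hsne : ∀ k, Real.sqrt (μ k) ≠ 0 := fun k => (Real.sqrt_pos.mpr (hμ k)).ne'
  have hc : ∀ i k, ⟪y i, φ k⟫ = Real.sqrt (μ k) * v k i := by
    intro i k
    rw [hφ, inner_smul_right, inner_sum]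
    simp_rw [inner_smul_right]
    have h1 : ∑ j, v k j * ⟪y i, y j⟫ = μ k * v k i := by
      rw [← heig k i]; exact Finset.sum_congr rfl fun j _ => by rw [hK]; ring
    have h2 : (Real.sqrt (μ k))⁻¹ * μ k = Real.sqrt (μ k) := by
      rw [inv_mul_eq_div, div_eq_iff (hsne k)]; exact (hsq k).symm
    rw [h1, ← mul_assoc, h2]
  -- orthonormality of φ
  have hφo : ∀ k l, ⟪φ k, φ l⟫ = if k = l then (1:ℝ) else 0 := by
    intro k l
    have h3 : ⟪φ k, φ l⟫ = (Real.sqrt (μ k))⁻¹ * ∑ i, v k i * ⟪y i, φ l⟫ := by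
      rw [hφ k, real_inner_smul_left, sum_inner]
      simp_rw [real_inner_smul_left]
    rw [h3]
    simp_rw [hc]
    have h4 : ∑ i, v k i * (Real.sqrt (μ l) * v l i)
        = Real.sqrt (μ l) * ∑ i, v k i * v l i := by
      rw [Finset.mul_sum]; exact Finset.sum_congr rfl fun i _ => by ring
    rw [h4, hvo]
    by_cases hkl : k = l
    · subst hkl; simp [inv_mul_cancel₀ (hsne k)]
    · simp [hkl]
  -- completeness of v
  have hcomp : ∀ i j : Fin N, ∑ k, v k i * v k j = if i = j then (1:ℝ) else 0 := by
    let M : Matrix (Fin N) (Fin N) ℝ := fun k i => v k i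
    have h1 : M * M.transpose = 1 := by
      ext k l
      rw [Matrix.mul_apply]; simp only [Matrix.transpose_apply]
      simpa [M, Matrix.mul_apply, Matrix.transpose_apply, Matrix.one_apply] using hvo k l
    have h2 := mul_eq_one_comm.mp h1
    intro i j
    have h3 := congrFun (congrFun h2 i) j
    rw [Matrix.mul_apply] at h3; simp only [Matrix.transpose_apply] at h3
    simpa [M, Matrix.mul_apply, Matrix.transpose_apply, Matrix.one_apply] using h3
  -- expansion of y in the φ basis
  have hspan : ∀ i, y i = ∑ k, ⟪y i, φ k⟫ • φ k := by
    intro i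
    have h5 : ∀ k : Fin N, ⟪y i, φ k⟫ • φ k = ∑ j, (v k i * v k j) • y j := by
      intro k
      rw [hc, hφ, smul_smul, Finset.smul_sum]
      refine Finset.sum_congr rfl fun j _ => ?_
      rw [smul_smul]
      congr 1
      field_simp
      rw [div_eq_iff (hsne k)]
      ring
    simp_rw [h5]
    rw [Finset.sum_comm]
    simp_rw [← Finset.sum_smul, hcomp]
    simp
  set S := Finset.univ.filter (fun k : Fin N => (k : ℕ) < Npod) with hS
  set T := Finset.univ.filter (fun k : Fin N => Npod ≤ (k : ℕ)) with hT
  have hST : ∀ (f : Fin N → H), ∑ k ∈ S, f k + ∑ k ∈ T, f k = ∑ k, f k := by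
    intro f
    have h7 := Finset.sum_filter_add_sum_filter_not Finset.univ
      (fun k : Fin N => (k : ℕ) < Npod) f
    simpa [hS, hT, not_lt] using h7
  have key : ∀ i, y i - ∑ k ∈ S, ⟪y i, φ k⟫ • φ k = ∑ k ∈ T, ⟪y i, φ k⟫ • φ k := by
    intro i
    rw [sub_eq_iff_eq_add, add_comm, hST fun k => ⟪y i, φ k⟫ • φ k]
    exact hspan i
  simp only [key]
  have hnorm : ∀ i, ‖∑ k ∈ T, ⟪y i, φ k⟫ • φ k‖ ^ 2 = ∑ k ∈ T, ⟪y i, φ k⟫ ^ 2 := by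
    intro i
    rw [← real_inner_self_eq_norm_sq, sum_inner]
    simp_rw [inner_sum, real_inner_smul_left, real_inner_smul_right, hφo]
    refine Finset.sum_congr rfl fun k hk => ?_
    rw [Finset.sum_eq_single k]
    · simp [pow_two]
    · intro l hl hlk; simp [Ne.symm hlk]
    · intro hk'; exact absurd hk hk'
  simp_rw [hnorm, hc]
  rw [Finset.sum_comm]
  refine Finset.sum_congr rfl fun k hk => ?_
  have h8 : ∑ i, (Real.sqrt (μ k) * v k i) ^ 2 = μ k * ∑ i, v k i * v k i := by
    rw [Finset.mul_sum]
    exact Finset.sum_congr rfl fun i _ => by rw [mul_pow, Real.sq_sqrt (hμ k).le]; ring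
  rw [h8, hvo k k]
  simp
end

section
/- Let H be a real inner product space, N a positive integer, and y₁, …, y_N ∈ H snapshots with Gram matrix K_{ij} = ⟪y_i, y_j⟫. Suppose v₁, …, v_N form an orthonormal basis of ℝ^N consisting of eigenvectors of K, K v_k = μ_k v_k, with eigenvalues sorted decreasingly μ₁ ≥ μ₂ ≥ … ≥ μ_N > 0. Then for every integer N_pod with 1 ≤ N_pod ≤ N and every orthonormal family ψ₁, …, ψ_{N_pod} in H, Σ_{i=1}^N ‖y_i − Σ_{k=1}^{N_pod} ⟪y_i, ψ_k⟫ ψ_k‖² ≥ Σ_{k=N_pod+1}^N μ_k; that is, the POD basis φ_k = μ_k^{−1/2} Σ_{j=1}^N (v_k)_j y_j minimizes the total squared projection error among all orthonormal families of size N_pod. -/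
open scoped RealInnerProductSpace

lemma pod_expand {H : Type*} [NormedAddCommGroup H] [InnerProductSpace ℝ H]
    {n : ℕ} {e : Fin n → H} (he : Orthonormal ℝ e) (x : H) :
    ‖x - ∑ i, ⟪x, e i⟫ • e i‖ ^ 2 = ‖x‖ ^ 2 - ∑ i, ⟪x, e i⟫ ^ 2 := by
  have h2 : ⟪x, ∑ i, ⟪x, e i⟫ • e i⟫ = ∑ i, ⟪x, e i⟫ ^ 2 := by
    rw [inner_sum]
    exact Finset.sum_congr rfl fun i _ => by rw [real_inner_smul_right]; ring
  have h3 : ‖∑ i, ⟪x, e i⟫ • e i‖ ^ 2 = ∑ i, ⟪x, e i⟫ ^ 2 := by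
    rw [← real_inner_self_eq_norm_sq]
    rw [he.inner_sum (fun i => ⟪x, e i⟫) (fun i => ⟪x, e i⟫)]
    exact Finset.sum_congr rfl fun i _ => by simp [sq]
  rw [norm_sub_sq_real, h2, h3]; ring

lemma pod_bessel {H : Type*} [NormedAddCommGroup H] [InnerProductSpace ℝ H]
    {n : ℕ} {e : Fin n → H} (he : Orthonormal ℝ e) (x : H) :
    ∑ i, ⟪x, e i⟫ ^ 2 ≤ ‖x‖ ^ 2 := by
  have h := pod_expand he x
  nlinarith [sq_nonneg ‖x - ∑ i, ⟪x, e i⟫ • e i‖]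

lemma pod_key {N : ℕ} (μ s : Fin N → ℝ) (hμ : ∀ k, 0 < μ k)
    (hsorted : ∀ k l : Fin N, k ≤ l → μ l ≤ μ k)
    (hs0 : ∀ k, 0 ≤ s k) (hs1 : ∀ k, s k ≤ 1)
    (Npod : ℕ) (hNpod2 : Npod ≤ N) (hsum : ∑ k, s k ≤ (Npod : ℝ)) :
    ∑ k, μ k * s k ≤ ∑ k ∈ Finset.univ.filter (fun k : Fin N => (k : ℕ) < Npod), μ k := by
  rcases eq_or_lt_of_le hNpod2 with h | h
  · have hfilt : Finset.univ.filter (fun k : Fin N => (k : ℕ) < Npod) = Finset.univ := by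
      ext k; simp only [Finset.mem_filter, Finset.mem_univ, true_and, iff_true]
      exact h ▸ k.isLt
    rw [hfilt]
    refine Finset.sum_le_sum fun k _ => ?_
    nlinarith [hμ k, hs1 k]
  · set c : Fin N := ⟨Npod, h⟩ with hc
    set m := μ c with hm
    have hm0 : 0 < m := hμ c
    have hcard : (Finset.univ.filter (fun k : Fin N => (k : ℕ) < Npod)).card = Npod := by
      have himg : Finset.univ.filter (fun k : Fin N => (k : ℕ) < Npod)
          = Finset.image (Fin.castLE hNpod2) Finset.univ := by
        ext k
        simp only [Finset.mem_filter, Finset.mem_univ, true_and, Finset.mem_image]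
        constructor
        · intro hk; exact ⟨⟨k, hk⟩, rfl⟩
        · rintro ⟨a, rfl⟩; exact a.isLt
      rw [himg, Finset.card_image_of_injective _ (Fin.castLE_injective hNpod2)]
      simp
    have hpt : ∀ k : Fin N,
        μ k * s k - (if (k : ℕ) < Npod then μ k else 0)
          ≤ m * (s k - if (k : ℕ) < Npod then 1 else 0) := by
      intro k
      by_cases hk : (k : ℕ) < Npod
      · simp only [hk, if_pos]
        have hkc : k ≤ c := by
          rw [Fin.le_def]; exact Nat.le_of_lt_succ (Nat.lt_succ_of_lt hk)
        have := hsorted k c hkc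
        nlinarith [hs1 k, hs0 k, hμ k]
      · simp only [hk, if_neg, not_false_iff, sub_zero]
        have hck : c ≤ k := by rw [Fin.le_def]; exact Nat.le_of_not_lt hk
        have := hsorted c k hck
        nlinarith [hs0 k, hμ k]
    have hsum2 : ∑ k, (μ k * s k - (if (k : ℕ) < Npod then μ k else 0))
        ≤ ∑ k, m * (s k - if (k : ℕ) < Npod then 1 else 0) :=
      Finset.sum_le_sum fun k _ => hpt k
    have e1 : ∑ k : Fin N, (if (k : ℕ) < Npod then μ k else 0)
        = ∑ k ∈ Finset.univ.filter (fun k : Fin N => (k : ℕ) < Npod), μ k :=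
      (Finset.sum_filter _ _).symm
    have e2 : ∑ k : Fin N, (if (k : ℕ) < Npod then (1 : ℝ) else 0) = (Npod : ℝ) := by
      rw [Finset.sum_boole, hcard]
    have hR : ∑ k, m * (s k - if (k : ℕ) < Npod then 1 else 0)
        = m * (∑ k, s k - (Npod : ℝ)) := by
      rw [← Finset.mul_sum, Finset.sum_sub_distrib, e2]
    have hL : ∑ k, (μ k * s k - (if (k : ℕ) < Npod then μ k else 0))
        = ∑ k, μ k * s k
          - ∑ k ∈ Finset.univ.filter (fun k : Fin N => (k : ℕ) < Npod), μ k := by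
      rw [Finset.sum_sub_distrib, e1]
    rw [hL, hR] at hsum2
    nlinarith [hm0, hsum]

/-- POD minimality (Proposition 3.2): with the eigenvalues of the snapshot Gram matrix sorted
decreasingly, any orthonormal family `ψ` of size `N_pod` in `H` yields a total squared
projection error at least `∑_{k ≥ N_pod} μ k`, i.e. the POD basis is optimal. -/
theorem stmt_7 {H : Type*} [NormedAddCommGroup H] [InnerProductSpace ℝ H]
    (N : ℕ) (hN : 0 < N) (y : Fin N → H)
    (K : Matrix (Fin N) (Fin N) ℝ) (hK : ∀ i j, K i j = ⟪y i, y j⟫)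
    (v : Fin N → EuclideanSpace ℝ (Fin N)) (hortho : Orthonormal ℝ v)
    (μ : Fin N → ℝ) (hμ : ∀ k, 0 < μ k)
    (hsorted : ∀ k l : Fin N, k ≤ l → μ l ≤ μ k)
    (heig : ∀ k i, ∑ j, K i j * v k j = μ k * v k i)
    (Npod : ℕ) (hNpod1 : 1 ≤ Npod) (hNpod2 : Npod ≤ N)
    (ψ : Fin Npod → H) (hψ : Orthonormal ℝ ψ) :
    ∑ k ∈ Finset.univ.filter (fun k : Fin N => Npod ≤ (k : ℕ)), μ k
      ≤ ∑ i, ‖y i - ∑ k, ⟪y i, ψ k⟫ • ψ k‖ ^ 2 := by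
  classical
  set z : Fin N → H := fun k => ∑ i, v k i • y i with hzdef
  have hvv : ∀ k l : Fin N, ∑ i, v k i * v l i = if k = l then 1 else 0 := by
    intro k l
    have h := orthonormal_iff_ite.mp hortho k l
    simpa [PiLp.inner_apply, mul_comm] using h
  have hdual : ∀ i j : Fin N, ∑ k, v k i * v k j = if i = j then 1 else 0 := by
    set V : Matrix (Fin N) (Fin N) ℝ := Matrix.of (fun k i => v k i) with hV
    have h1 : V * V.transpose = 1 := by
      ext k l
      simp [Matrix.mul_apply, Matrix.one_apply, hV, hvv k l]
    have h2 : V.transpose * V = 1 := mul_eq_one_comm.mp h1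
    intro i j
    have := congrArg (fun M : Matrix (Fin N) (Fin N) ℝ => M i j) h2
    simpa [Matrix.mul_apply, Matrix.one_apply, hV] using this
  have hzz : ∀ k l : Fin N, ⟪z k, z l⟫ = if k = l then μ k else 0 := by
    intro k l
    have step1 : ⟪z k, z l⟫ = ∑ i, v k i * (∑ j, K i j * v l j) := by
      simp only [hzdef, sum_inner, inner_sum, real_inner_smul_left, real_inner_smul_right]
      rw [Finset.sum_comm]
      refine Finset.sum_congr rfl fun i _ => ?_
      rw [Finset.mul_sum]
      refine Finset.sum_congr rfl fun j _ => ?_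
      rw [hK]; ring
    rw [step1]
    have step2 : ∑ i, v k i * (∑ j, K i j * v l j) = μ l * ∑ i, v k i * v l i := by
      rw [Finset.mul_sum]
      refine Finset.sum_congr rfl fun i _ => ?_
      rw [heig l i]; ring
    rw [step2, hvv k l]
    rcases eq_or_ne k l with rfl | hne
    · simp
    · simp [hne]
  have hy : ∀ i, y i = ∑ k, v k i • z k := by
    intro i
    have h : ∑ k, v k i • z k = ∑ j, (∑ k, v k i * v k j) • y j := by
      simp only [hzdef, Finset.smul_sum, smul_smul]
      rw [Finset.sum_comm]
      simp [Finset.sum_smul]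
    rw [h]
    simp [hdual, ite_smul, Finset.sum_ite_eq]
  have hyψ : ∀ i (l : Fin Npod), ⟪y i, ψ l⟫ = ∑ k, v k i * ⟪z k, ψ l⟫ := by
    intro i l
    conv_lhs => rw [hy i]
    rw [sum_inner]
    exact Finset.sum_congr rfl fun k _ => real_inner_smul_left _ _ _
  have hen : ∀ l : Fin Npod, ∑ i, ⟪y i, ψ l⟫ ^ 2 = ∑ k, ⟪z k, ψ l⟫ ^ 2 := by
    intro l
    calc ∑ i, ⟪y i, ψ l⟫ ^ 2
        = ∑ i, ∑ k, ∑ m, (v k i * v m i) * (⟪z k, ψ l⟫ * ⟪z m, ψ l⟫) := by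
          refine Finset.sum_congr rfl fun i _ => ?_
          rw [hyψ i l, sq, Finset.sum_mul_sum]
          exact Finset.sum_congr rfl fun k _ => Finset.sum_congr rfl fun m _ => by ring
      _ = ∑ k, ∑ m, (∑ i, v k i * v m i) * (⟪z k, ψ l⟫ * ⟪z m, ψ l⟫) := by
          rw [Finset.sum_comm]
          refine Finset.sum_congr rfl fun k _ => ?_
          rw [Finset.sum_comm]
          refine Finset.sum_congr rfl fun m _ => ?_
          rw [Finset.sum_mul]
      _ = ∑ k, ⟪z k, ψ l⟫ ^ 2 := by
          refine Finset.sum_congr rfl fun k _ => ?_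
          simp only [hvv, ite_mul, one_mul, zero_mul]
          rw [Finset.sum_ite_eq]
          simp [sq]
  have hnorm : ∑ i, ‖y i‖ ^ 2 = ∑ k, μ k := by
    have h1 : ∀ i, ‖y i‖ ^ 2 = ∑ k, μ k * v k i ^ 2 := by
      intro i
      rw [← real_inner_self_eq_norm_sq, hy i]
      simp only [sum_inner, inner_sum, real_inner_smul_left, real_inner_smul_right, hzz,
        mul_ite, mul_zero]
      rw [Finset.sum_comm]
      refine Finset.sum_congr rfl fun k _ => ?_
      rw [Finset.sum_ite_eq]
      simp [sq]; ring
    rw [Finset.sum_congr rfl fun i _ => h1 i, Finset.sum_comm]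
    refine Finset.sum_congr rfl fun k _ => ?_
    rw [← Finset.mul_sum]
    have h2 : ∑ i, v k i ^ 2 = (1 : ℝ) := by
      have := hvv k k
      simp only [if_pos rfl] at this
      simpa [sq] using this
    rw [h2, mul_one]
  have hφ : Orthonormal ℝ (fun k => (Real.sqrt (μ k))⁻¹ • z k) := by
    rw [orthonormal_iff_ite]
    intro k l
    rw [real_inner_smul_left, real_inner_smul_right, hzz k l]
    rcases eq_or_ne k l with rfl | hne
    · simp [Real.mul_self_sqrt (hμ k).le]
      rw [← mul_assoc, ← mul_inv, Real.mul_self_sqrt (hμ k).le]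
      exact inv_mul_cancel₀ (hμ k).ne'
    · simp [hne]
  have hA : ∀ l : Fin Npod, ∑ k, ⟪z k, ψ l⟫ ^ 2 / μ k ≤ 1 := by
    intro l
    have hn : ‖ψ l‖ ^ 2 = 1 := by rw [hψ.1 l]; norm_num
    calc ∑ k, ⟪z k, ψ l⟫ ^ 2 / μ k
        = ∑ k, ⟪ψ l, (Real.sqrt (μ k))⁻¹ • z k⟫ ^ 2 := by
          refine Finset.sum_congr rfl fun k _ => ?_
          rw [real_inner_smul_right, mul_pow, inv_pow, Real.sq_sqrt (hμ k).le,
            real_inner_comm (ψ l) (z k), div_eq_mul_inv, mul_comm]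
      _ ≤ ‖ψ l‖ ^ 2 := pod_bessel hφ (ψ l)
      _ = 1 := hn
  have hB : ∀ k, ∑ l, ⟪z k, ψ l⟫ ^ 2 ≤ μ k := by
    intro k
    have hb := pod_bessel hψ (z k)
    have hzn : ‖z k‖ ^ 2 = μ k := by
      rw [← real_inner_self_eq_norm_sq]
      simpa using hzz k k
    linarith
  set s : Fin N → ℝ := fun k => (∑ l, ⟪z k, ψ l⟫ ^ 2) / μ k with hsdef
  have hs0 : ∀ k, 0 ≤ s k := fun k =>
    div_nonneg (Finset.sum_nonneg fun l _ => sq_nonneg _) (hμ k).le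
  have hs1 : ∀ k, s k ≤ 1 := fun k => (div_le_one (hμ k)).mpr (hB k)
  have hssum : ∑ k, s k ≤ (Npod : ℝ) := by
    calc ∑ k, s k = ∑ k, ∑ l, ⟪z k, ψ l⟫ ^ 2 / μ k :=
          Finset.sum_congr rfl fun k _ => Finset.sum_div _ _ _
      _ = ∑ l, ∑ k, ⟪z k, ψ l⟫ ^ 2 / μ k := Finset.sum_comm
      _ ≤ ∑ _l : Fin Npod, (1 : ℝ) := Finset.sum_le_sum fun l _ => hA l
      _ = (Npod : ℝ) := by simp
  have hμs : ∀ k, μ k * s k = ∑ l, ⟪z k, ψ l⟫ ^ 2 := by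
    intro k
    rw [hsdef]
    rw [mul_div_assoc', mul_comm, mul_div_assoc, div_self (hμ k).ne', mul_one]
  have key := pod_key μ s hμ hsorted hs0 hs1 Npod hNpod2 hssum
  have hRHS : ∑ i, ‖y i - ∑ k, ⟪y i, ψ k⟫ • ψ k‖ ^ 2
      = ∑ k, μ k - ∑ k, μ k * s k := by
    have e1 : ∀ i, ‖y i - ∑ k, ⟪y i, ψ k⟫ • ψ k‖ ^ 2
        = ‖y i‖ ^ 2 - ∑ l, ⟪y i, ψ l⟫ ^ 2 := fun i => pod_expand hψ (y i)
    rw [Finset.sum_congr rfl fun i _ => e1 i, Finset.sum_sub_distrib, hnorm]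
    congr 1
    rw [Finset.sum_comm]
    calc ∑ l : Fin Npod, ∑ i, ⟪y i, ψ l⟫ ^ 2
        = ∑ l : Fin Npod, ∑ k, ⟪z k, ψ l⟫ ^ 2 :=
          Finset.sum_congr rfl fun l _ => hen l
      _ = ∑ k, ∑ l : Fin Npod, ⟪z k, ψ l⟫ ^ 2 := Finset.sum_comm
      _ = ∑ k, μ k * s k := Finset.sum_congr rfl fun k _ => (hμs k).symm
  have hfilt : Finset.univ.filter (fun k : Fin N => ¬ Npod ≤ (k : ℕ))
      = Finset.univ.filter (fun k : Fin N => (k : ℕ) < Npod) := by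
    ext k; simp [Finset.mem_filter, Nat.not_le]
  have hsplit := Finset.sum_filter_add_sum_filter_not Finset.univ
    (fun k : Fin N => Npod ≤ (k : ℕ)) μ
  rw [hfilt] at hsplit
  rw [hRHS]
  linarith
end

section
/- Let γ > 0, T > 0, let m be a positive integer, set Δt = T/m and ξ = 1/(1 + γ Δt), and let a₁, …, a_m be nonnegative real numbers. Then Δt · Σ_{j=1}^m ξ^{m−j+1} a_j ≤ √((1 − e^{−2γT})/(2γ)) · √(Δt Σ_{j=1}^m a_j²). -/
/-- Combined Cauchy–Schwarz / geometric-sum estimate (eqs. (4.15)–(4.17)): with `Δt = T/m`,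
`ξ = 1/(1 + γ Δt)`, and nonnegative `a j`,
`Δt ∑_{j=1}^m ξ^{m−j+1} a j ≤ √((1 − e^{−2γT})/(2γ)) · √(Δt ∑_{j=1}^m a j²)`. -/
theorem stmt_11 (γ T : ℝ) (hγ : 0 < γ) (hT : 0 < T) (m : ℕ) (hm : 0 < m)
    (Δt ξ : ℝ) (hΔt : Δt = T / m) (hξ : ξ = 1 / (1 + γ * Δt))
    (a : ℕ → ℝ) (ha : ∀ j, 1 ≤ j → j ≤ m → 0 ≤ a j) :
    Δt * ∑ j ∈ Finset.Icc 1 m, ξ ^ (m - j + 1) * a j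
      ≤ Real.sqrt ((1 - Real.exp (-2 * γ * T)) / (2 * γ)) *
        Real.sqrt (Δt * ∑ j ∈ Finset.Icc 1 m, (a j) ^ 2) := by
  have hm' : (0:ℝ) < m := by exact_mod_cast hm
  have hΔt0 : 0 < Δt := by rw [hΔt]; positivity
  have hd : 0 < 1 + γ * Δt := by nlinarith
  have hξ0 : 0 < ξ := by rw [hξ]; positivity
  have hξd : ξ * (1 + γ * Δt) = 1 := by rw [hξ]; field_simp
  set r : ℝ := ξ ^ 2 with hr
  have hr0 : 0 < r := by positivity
  have hrd : r * (1 + γ * Δt) ^ 2 = 1 := by rw [hr]; nlinarith [hξd]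
  have hrpos : 0 ≤ r * (γ * Δt) ^ 2 := by positivity
  have hr1 : r < 1 := by nlinarith [mul_pos (mul_pos hr0 hγ) hΔt0]
  have hmT : (m : ℝ) * Δt = T := by rw [hΔt]; field_simp
  have hpow : (1 + γ * Δt) ^ m ≤ Real.exp (γ * T) := by
    calc (1 + γ * Δt) ^ m ≤ (Real.exp (γ * Δt)) ^ m := by
          apply pow_le_pow_left₀ (le_of_lt hd)
          have := Real.add_one_le_exp (γ * Δt); linarith
      _ = Real.exp (γ * T) := by
          rw [← Real.exp_nat_mul, ← hmT]; ring_nf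
  have hrm_pos : 0 < r ^ m := by positivity
  have hrmexp : 1 ≤ r ^ m * Real.exp (2 * γ * T) := by
    have h1 : r ^ m * ((1 + γ * Δt) ^ m) ^ 2 = 1 := by
      rw [hr, pow_right_comm, ← mul_pow, ← mul_pow, hξd, one_pow, one_pow]
    have h2 : ((1 + γ * Δt) ^ m) ^ 2 ≤ Real.exp (2 * γ * T) := by
      calc ((1 + γ * Δt) ^ m) ^ 2 ≤ (Real.exp (γ * T)) ^ 2 :=
            pow_le_pow_left₀ (by positivity) hpow 2
        _ = Real.exp (2 * γ * T) := by
            rw [← Real.exp_nat_mul]; ring_nf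
    nlinarith
  have hexp_le : Real.exp (-2 * γ * T) ≤ r ^ m := by
    have he : Real.exp (-2 * γ * T) * Real.exp (2 * γ * T) = 1 := by
      rw [← Real.exp_add]; ring_nf; exact Real.exp_zero
    have hep : 0 < Real.exp (2 * γ * T) := Real.exp_pos _
    nlinarith
  have hsum_eq : ∑ j ∈ Finset.Icc 1 m, r ^ (m - j + 1)
      = ∑ i ∈ Finset.range m, r ^ (i + 1) := by
    have h0 : Finset.Icc 1 m = Finset.Ico 1 (m + 1) := by
      rw [Finset.Ico_add_one_right_eq_Icc]
    rw [h0, Finset.sum_Ico_eq_sum_range]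
    simp only [Nat.add_sub_cancel]
    rw [← Finset.sum_range_reflect (fun i => r ^ (i + 1)) m]
    apply Finset.sum_congr rfl
    intro i hi
    have him : i < m := Finset.mem_range.mp hi
    congr 1
    omega
  set S : ℝ := ∑ i ∈ Finset.range m, r ^ i with hS
  have hgeo : S * (1 - r) = 1 - r ^ m := by
    have := geom_sum_mul r m
    linear_combination -this
  have hgpos : 0 ≤ S :=
    Finset.sum_nonneg fun i _ => by positivity
  have hkey : Δt * ∑ j ∈ Finset.Icc 1 m, r ^ (m - j + 1)
      ≤ (1 - Real.exp (-2 * γ * T)) / (2 * γ) := by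
    rw [hsum_eq]
    have h1 : ∑ i ∈ Finset.range m, r ^ (i + 1) = r * S := by
      rw [hS, Finset.mul_sum]; exact Finset.sum_congr rfl fun i _ => by ring
    rw [h1, le_div_iff₀ (by positivity : (0:ℝ) < 2 * γ)]
    have hrineq : 2 * γ * Δt * r ≤ 1 - r := by nlinarith [hrd, hrpos]
    calc Δt * (r * S) * (2 * γ) = (2 * γ * Δt * r) * S := by ring
      _ ≤ (1 - r) * S := mul_le_mul_of_nonneg_right hrineq hgpos
      _ = 1 - r ^ m := by rw [mul_comm]; exact hgeo
      _ ≤ 1 - Real.exp (-2 * γ * T) := by linarith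
  have hCS := Finset.sum_mul_sq_le_sq_mul_sq (Finset.Icc 1 m)
    (fun j => ξ ^ (m - j + 1)) (fun j => a j)
  have hS1 : 0 ≤ ∑ j ∈ Finset.Icc 1 m, ξ ^ (m - j + 1) * a j :=
    Finset.sum_nonneg fun j hj => by
      obtain ⟨h1, h2⟩ := Finset.mem_Icc.mp hj
      exact mul_nonneg (by positivity) (ha j h1 h2)
  have hSa : 0 ≤ ∑ j ∈ Finset.Icc 1 m, (a j) ^ 2 :=
    Finset.sum_nonneg fun j _ => sq_nonneg _
  have hE : 0 ≤ (1 - Real.exp (-2 * γ * T)) / (2 * γ) := by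
    have : r ^ m ≤ 1 := pow_le_one₀ hr0.le hr1.le
    apply div_nonneg (by linarith) (by positivity)
  rw [← Real.sqrt_mul hE]
  rw [Real.le_sqrt (mul_nonneg hΔt0.le hS1) (mul_nonneg hE (mul_nonneg hΔt0.le hSa))]
  have h2 : (∑ j ∈ Finset.Icc 1 m, ξ ^ (m - j + 1) * a j) ^ 2
      ≤ (∑ j ∈ Finset.Icc 1 m, r ^ (m - j + 1)) * ∑ j ∈ Finset.Icc 1 m, (a j) ^ 2 := by
    have heq : ∑ j ∈ Finset.Icc 1 m, (ξ ^ (m - j + 1)) ^ 2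
        = ∑ j ∈ Finset.Icc 1 m, r ^ (m - j + 1) :=
      Finset.sum_congr rfl fun j _ => by rw [hr, ← pow_mul, mul_comm, pow_mul]
    calc (∑ j ∈ Finset.Icc 1 m, ξ ^ (m - j + 1) * a j) ^ 2
        ≤ (∑ j ∈ Finset.Icc 1 m, (ξ ^ (m - j + 1)) ^ 2) * ∑ j ∈ Finset.Icc 1 m, (a j) ^ 2 := hCS
      _ = _ := by rw [heq]
  calc (Δt * ∑ j ∈ Finset.Icc 1 m, ξ ^ (m - j + 1) * a j) ^ 2
      = Δt ^ 2 * (∑ j ∈ Finset.Icc 1 m, ξ ^ (m - j + 1) * a j) ^ 2 := by ring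
    _ ≤ Δt ^ 2 * ((∑ j ∈ Finset.Icc 1 m, r ^ (m - j + 1)) * ∑ j ∈ Finset.Icc 1 m, (a j) ^ 2) :=
        mul_le_mul_of_nonneg_left h2 (by positivity)
    _ = (Δt * ∑ j ∈ Finset.Icc 1 m, r ^ (m - j + 1)) * (Δt * ∑ j ∈ Finset.Icc 1 m, (a j) ^ 2) := by
        ring
    _ ≤ (1 - Real.exp (-2 * γ * T)) / (2 * γ) * (Δt * ∑ j ∈ Finset.Icc 1 m, (a j) ^ 2) :=
        mul_le_mul_of_nonneg_right hkey (by positivity)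
end

section
/- Let E be a real Banach space, 0 < a < b, C ≥ 0, and let g : ℝ → E be a function with derivative g′ on [a, b], such that g′ has derivative g′′ on [a, b], g′′ is continuous on [a, b], and ‖g′′(s)‖ ≤ C/s for all s ∈ [a, b]. Then ‖g′(b) − (g(b) − g(a))/(b − a)‖ ≤ C (b − a)/(2a). -/
/-- Truncation-error estimate (eqs. (4.19)–(4.22)): for a twice differentiable Banach-space
valued function `g` on `[a, b]` (with `0 < a < b`) with continuous second derivative
satisfying `‖g″(s)‖ ≤ C / s` on `[a, b]`,
`‖g′(b) − (g(b) − g(a))/(b − a)‖ ≤ C (b − a)/(2a)`. -/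
theorem stmt_13 {E : Type*} [NormedAddCommGroup E] [NormedSpace ℝ E] [CompleteSpace E]
    (a b : ℝ) (ha : 0 < a) (hab : a < b) (C : ℝ) (hC : 0 ≤ C)
    (g g' g'' : ℝ → E)
    (hg : ∀ t ∈ Set.Icc a b, HasDerivAt g (g' t) t)
    (hg' : ∀ t ∈ Set.Icc a b, HasDerivAt g' (g'' t) t)
    (hcont : ContinuousOn g'' (Set.Icc a b))
    (hbound : ∀ s ∈ Set.Icc a b, ‖g'' s‖ ≤ C / s) :
    ‖g' b - (b - a)⁻¹ • (g b - g a)‖ ≤ C * (b - a) / (2 * a) := by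
  have hba : (0:ℝ) < b - a := by linarith
  set φ : ℝ → E := fun s => g s - g a - (s - a) • g' s with hφ
  set φ' : ℝ → E := fun s => (-(s - a)) • g'' s with hφ'
  have hderiv : ∀ s ∈ Set.Icc a b, HasDerivAt φ (φ' s) s := by
    intro s hs
    have h1 := hg s hs
    have h2 : HasDerivAt (fun t : ℝ => (t - a) • g' t)
        ((1 : ℝ) • g' s + (s - a) • g'' s) s := by
      have := HasDerivAt.smul ((hasDerivAt_id s).sub_const a) (hg' s hs)
      convert this using 1
      simp only [id_eq, one_smul]
      abel
      simp only [id_eq, one_smul]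
      abel
    have h3 : HasDerivAt φ (g' s - ((1 : ℝ) • g' s + (s - a) • g'' s)) s :=
      (h1.sub_const (g a)).sub h2
    convert h3 using 1
    simp only [hφ']
    module
  have hcontφ' : ContinuousOn φ' (Set.Icc a b) := by
    apply ContinuousOn.smul _ hcont
    fun_prop
  have hIcc : Set.uIcc a b = Set.Icc a b := Set.uIcc_of_le hab.le
  have hint : IntervalIntegrable φ' MeasureTheory.volume a b := by
    apply ContinuousOn.intervalIntegrable
    rwa [hIcc]
  have heq : ∫ s in a..b, φ' s = φ b - φ a := by
    apply intervalIntegral.integral_eq_sub_of_hasDerivAt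
    · intro s hs; exact hderiv s (hIcc ▸ hs)
    · exact hint
  have hφa : φ a = 0 := by simp [hφ]
  -- pointwise bound
  have hnormbd : ∀ s ∈ Set.Icc a b, ‖φ' s‖ ≤ (s - a) * (C / a) := by
    intro s hs
    obtain ⟨hsa, hsb⟩ := hs
    have hs0 : 0 < s := lt_of_lt_of_le ha hsa
    have heqn : ‖φ' s‖ = (s - a) * ‖g'' s‖ := by
      rw [hφ', norm_smul, Real.norm_eq_abs, abs_neg,
        abs_of_nonneg (by linarith : (0:ℝ) ≤ s - a)]
    rw [heqn]
    have h1 : ‖g'' s‖ ≤ C / s := hbound s ⟨hsa, hsb⟩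
    have h2 : C / s ≤ C / a := div_le_div_of_nonneg_left hC ha hsa
    have h3 : ‖g'' s‖ ≤ C / a := le_trans h1 h2
    exact mul_le_mul_of_nonneg_left h3 (by linarith)
  have hbd : ‖∫ s in a..b, φ' s‖ ≤ C / a * (b - a) ^ 2 / 2 := by
    have h1 : ‖∫ s in a..b, φ' s‖ ≤ ∫ s in a..b, ‖φ' s‖ :=
      intervalIntegral.norm_integral_le_integral_norm hab.le
    have h2 : (∫ s in a..b, ‖φ' s‖) ≤ ∫ s in a..b, (s - a) * (C / a) := by
      apply intervalIntegral.integral_mono_on hab.le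
      · apply ContinuousOn.intervalIntegrable
        rw [hIcc]; exact hcontφ'.norm
      · apply ContinuousOn.intervalIntegrable; fun_prop
      · exact hnormbd
    have h3 : (∫ s in a..b, (s - a) * (C / a)) = C / a * (b - a) ^ 2 / 2 := by
      have hd : ∀ s ∈ Set.uIcc a b,
          HasDerivAt (fun x : ℝ => (x - a) ^ 2 * (C / a) / 2) ((s - a) * (C / a)) s := by
        intro s _
        have h := ((((hasDerivAt_id s).sub_const a).pow 2).mul_const (C / a)).div_const 2
        convert h using 1
        · rfl
        · rfl
        · funext x; simp only [Pi.pow_apply, id_eq]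
        · simp only [id_eq, Nat.reduceSub, pow_one]
          ring
      rw [intervalIntegral.integral_eq_sub_of_hasDerivAt hd
        (by apply ContinuousOn.intervalIntegrable; fun_prop)]
      ring
    linarith
  have hφb : ‖φ b‖ ≤ C / a * (b - a) ^ 2 / 2 := by
    rw [← sub_zero (φ b), ← hφa, ← heq]; exact hbd
  have key : g' b - (b - a)⁻¹ • (g b - g a) = (-(b - a)⁻¹) • φ b := by
    simp only [hφ]
    match_scalars <;> field_simp
  rw [key, norm_smul]
  have hn : ‖-(b - a)⁻¹‖ = (b - a)⁻¹ := by
    rw [norm_neg, Real.norm_eq_abs, abs_of_pos (inv_pos.mpr hba)]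
  rw [hn]
  calc (b - a)⁻¹ * ‖φ b‖ ≤ (b - a)⁻¹ * (C / a * (b - a) ^ 2 / 2) :=
        mul_le_mul_of_nonneg_left hφb (inv_nonneg.mpr hba.le)
    _ = C * (b - a) / (2 * a) := by field_simp
end

section
/- Let E be a real Banach space, b > 0, C ≥ 0, and let g : ℝ → E be a function with derivative g′ on [0, b], such that g′ has derivative g′′ on (0, b], the function s ↦ (s) • g′′(s) is continuous on [0, b] (extended by 0 at s = 0), and ‖g′′(s)‖ ≤ C/s for all s ∈ (0, b]. Then ‖g′(b) − (g(b) − g(0))/b‖ ≤ C. -/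
/-- First-step estimate (eq. (4.21)): for a Banach-space valued function `g` differentiable on
`[0, b]`, twice differentiable on `(0, b]`, such that `s ↦ s • g″(s)` is continuous on `[0, b]`
(note that it automatically takes the value `0` at `s = 0`) and `‖g″(s)‖ ≤ C / s` on `(0, b]`,
the truncation error of the backward difference quotient satisfies
`‖g′(b) − (g(b) − g(0))/b‖ ≤ C`. -/
theorem stmt_14 {E : Type*} [NormedAddCommGroup E] [NormedSpace ℝ E] [CompleteSpace E]
    (b : ℝ) (hb : 0 < b) (C : ℝ) (hC : 0 ≤ C)
    (g g' g'' : ℝ → E)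
    (hg : ∀ t ∈ Set.Icc (0 : ℝ) b, HasDerivAt g (g' t) t)
    (hg' : ∀ t ∈ Set.Ioc (0 : ℝ) b, HasDerivAt g' (g'' t) t)
    (hcont : ContinuousOn (fun s : ℝ => s • g'' s) (Set.Icc (0 : ℝ) b))
    (hbound : ∀ s ∈ Set.Ioc (0 : ℝ) b, ‖g'' s‖ ≤ C / s) :
    ‖g' b - b⁻¹ • (g b - g 0)‖ ≤ C := by
  -- continuity of g'' on (0, b]
  have hg''cont : ContinuousOn g'' (Set.Ioc (0 : ℝ) b) := by
    have h1 : ContinuousOn (fun s : ℝ => s⁻¹ • (s • g'' s)) (Set.Ioc (0 : ℝ) b) := by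
      apply ContinuousOn.smul
      · exact ContinuousOn.inv₀ continuousOn_id fun s hs => ne_of_gt hs.1
      · exact hcont.mono Set.Ioc_subset_Icc_self
    refine h1.congr fun s hs => ?_
    dsimp only; rw [inv_smul_smul₀ (ne_of_gt hs.1)]
  -- key estimate on [ε, b]
  have key : ∀ ε ∈ Set.Ioc (0 : ℝ) b,
      ‖(b • g' b - g b) - (ε • g' ε - g ε)‖ ≤ C * (b - ε) := by
    intro ε hε
    obtain ⟨hε0, hεb⟩ := hε
    have huIcc : Set.uIcc ε b = Set.Icc ε b := Set.uIcc_of_le hεb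
    have hsub : Set.Icc ε b ⊆ Set.Ioc (0 : ℝ) b := fun x hx => ⟨lt_of_lt_of_le hε0 hx.1, hx.2⟩
    have hderiv : ∀ x ∈ Set.uIcc ε b,
        HasDerivAt (fun s => s • g' s - g s) (x • g'' x) x := by
      intro x hx
      rw [huIcc] at hx
      have hx' := hsub hx
      have h2 := ((hasDerivAt_id x).smul (hg' x hx')).sub (hg x ⟨le_of_lt hx'.1, hx'.2⟩)
      exact (by simpa using h2 : HasDerivAt (id • g' - g) (x • g'' x) x)
    have hint : IntervalIntegrable (fun s : ℝ => s • g'' s) MeasureTheory.volume ε b := by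
      apply ContinuousOn.intervalIntegrable
      rw [huIcc]
      exact hcont.mono fun x hx => ⟨le_of_lt (lt_of_lt_of_le hε0 hx.1), hx.2⟩
    have hftc := intervalIntegral.integral_eq_sub_of_hasDerivAt hderiv hint
    have hnorm : ‖∫ x in ε..b, x • g'' x‖ ≤ C * |b - ε| := by
      apply intervalIntegral.norm_integral_le_of_norm_le_const
      intro x hx
      rw [Set.uIoc_of_le hεb] at hx
      have hx0 : (0 : ℝ) < x := lt_trans hε0 hx.1
      rw [norm_smul, Real.norm_eq_abs, abs_of_pos hx0]
      calc x * ‖g'' x‖ ≤ x * (C / x) := by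
            exact mul_le_mul_of_nonneg_left (hbound x ⟨hx0, hx.2⟩) (le_of_lt hx0)
        _ = C := by field_simp
    rw [hftc] at hnorm
    rwa [abs_of_nonneg (by linarith)] at hnorm
  -- bound on ‖g' ε‖
  have key2 : ∀ ε ∈ Set.Ioc (0 : ℝ) b,
      ‖g' ε‖ ≤ ‖g' b‖ + C * (Real.log b - Real.log ε) := by
    intro ε hε
    obtain ⟨hε0, hεb⟩ := hε
    have huIcc : Set.uIcc ε b = Set.Icc ε b := Set.uIcc_of_le hεb
    have hsub : Set.Icc ε b ⊆ Set.Ioc (0 : ℝ) b := fun x hx => ⟨lt_of_lt_of_le hε0 hx.1, hx.2⟩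
    have hderiv : ∀ x ∈ Set.uIcc ε b, HasDerivAt g' (g'' x) x := by
      intro x hx; rw [huIcc] at hx; exact hg' x (hsub hx)
    have hint : IntervalIntegrable g'' MeasureTheory.volume ε b := by
      apply ContinuousOn.intervalIntegrable
      rw [huIcc]
      exact hg''cont.mono hsub
    have hftc := intervalIntegral.integral_eq_sub_of_hasDerivAt hderiv hint
    have hbint : IntervalIntegrable (fun s : ℝ => C / s) MeasureTheory.volume ε b := by
      apply ContinuousOn.intervalIntegrable
      rw [huIcc]
      exact ContinuousOn.div continuousOn_const continuousOn_id
        fun x hx => ne_of_gt (lt_of_lt_of_le hε0 hx.1)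
    have hnorm : ‖∫ x in ε..b, g'' x‖ ≤ |∫ x in ε..b, C / x| := by
      apply intervalIntegral.norm_integral_le_abs_of_norm_le _ hbint
      refine (MeasureTheory.ae_restrict_iff' measurableSet_uIoc).2 ?_
      filter_upwards with x hx
      rw [Set.uIoc_of_le hεb] at hx
      exact hbound x ⟨lt_trans hε0 hx.1, hx.2⟩
    have hval : (∫ x in ε..b, C / x) = C * (Real.log b - Real.log ε) := by
      have h0 : (0 : ℝ) ∉ Set.uIcc ε b := by
        rw [huIcc]; intro h; exact absurd h.1 (not_le.2 hε0)
      have h1 : (∫ x in ε..b, C / x) = C * ∫ x in ε..b, x⁻¹ := by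
        simp_rw [div_eq_mul_inv]
        exact intervalIntegral.integral_const_mul C _
      rw [h1, integral_inv h0, Real.log_div (ne_of_gt hb) (ne_of_gt hε0)]
    have hlog : Real.log ε ≤ Real.log b := Real.log_le_log hε0 hεb
    rw [hftc, hval, abs_of_nonneg (by nlinarith)] at hnorm
    calc ‖g' ε‖ = ‖g' b - (g' b - g' ε)‖ := by rw [sub_sub_cancel]
      _ ≤ ‖g' b‖ + ‖g' b - g' ε‖ := norm_sub_le _ _
      _ ≤ ‖g' b‖ + C * (Real.log b - Real.log ε) := by linarith
  -- the limit filter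
  set l := nhdsWithin (0 : ℝ) (Set.Ioc 0 b) with hl
  have hlne : l.NeBot := by
    rw [hl, ← mem_closure_iff_nhdsWithin_neBot, closure_Ioc (ne_of_lt hb)]
    exact ⟨le_refl 0, le_of_lt hb⟩
  -- ε • g' ε → 0
  have hlim1 : Filter.Tendsto (fun ε => ε • g' ε) l (nhds 0) := by
    have hG : Filter.Tendsto
        (fun ε : ℝ => ε * (‖g' b‖ + C * Real.log b) - C * (ε * Real.log ε)) l (nhds 0) := by
      have h1 : Filter.Tendsto (fun ε : ℝ => ε * (‖g' b‖ + C * Real.log b)) l (nhds 0) := by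
        have := (continuous_id.mul (continuous_const : Continuous fun _ : ℝ =>
          ‖g' b‖ + C * Real.log b)).tendsto (0 : ℝ)
        simp only [Pi.mul_apply, zero_mul, id] at this
        exact this.mono_left nhdsWithin_le_nhds
      have h2 : Filter.Tendsto (fun ε : ℝ => C * (ε * Real.log ε)) l (nhds 0) := by
        have := ((continuous_const : Continuous fun _ : ℝ => C).mul Real.continuous_mul_log).tendsto (0 : ℝ)
        simp only [Pi.mul_apply, zero_mul, mul_zero, Real.log_zero] at this
        exact this.mono_left nhdsWithin_le_nhds
      simpa using h1.sub h2
    refine squeeze_zero_norm' ?_ hG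
    filter_upwards [self_mem_nhdsWithin] with ε hε
    rw [norm_smul, Real.norm_eq_abs, abs_of_pos hε.1]
    calc ε * ‖g' ε‖ ≤ ε * (‖g' b‖ + C * (Real.log b - Real.log ε)) :=
          mul_le_mul_of_nonneg_left (key2 ε hε) (le_of_lt hε.1)
      _ = ε * (‖g' b‖ + C * Real.log b) - C * (ε * Real.log ε) := by ring
  -- g ε → g 0
  have hlim2 : Filter.Tendsto g l (nhds (g 0)) :=
    ((hg 0 ⟨le_refl 0, le_of_lt hb⟩).continuousAt.tendsto).mono_left nhdsWithin_le_nhds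
  -- the full expression tends to b • g' b - (g b - g 0)
  have hlim : Filter.Tendsto (fun ε => (b • g' b - g b) - (ε • g' ε - g ε)) l
      (nhds (b • g' b - (g b - g 0))) := by
    have h := (tendsto_const_nhds (x := b • g' b - g b) (f := l)).sub (hlim1.sub hlim2)
    have he : b • g' b - (g b - g 0) = (b • g' b - g b) - ((0 : E) - g 0) := by abel
    rw [he]
    exact h
  -- pass bound to the limit
  have hmain : ‖b • g' b - (g b - g 0)‖ ≤ C * b := by
    refine le_of_tendsto (hlim.norm) ?_
    filter_upwards [self_mem_nhdsWithin] with ε hε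
    calc ‖(b • g' b - g b) - (ε • g' ε - g ε)‖ ≤ C * (b - ε) := key ε hε
      _ ≤ C * b := by nlinarith [hε.1]
  -- conclude
  have hbb : b⁻¹ • (b • g' b) = g' b := by
    rw [smul_smul, inv_mul_cancel₀ (ne_of_gt hb), one_smul]
  have heq : g' b - b⁻¹ • (g b - g 0) = b⁻¹ • (b • g' b - (g b - g 0)) := by
    rw [smul_sub b⁻¹ (b • g' b) (g b - g 0), hbb]
  rw [heq, norm_smul, Real.norm_eq_abs, abs_of_pos (inv_pos.2 hb)]
  calc b⁻¹ * ‖b • g' b - (g b - g 0)‖ ≤ b⁻¹ * (C * b) :=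
        mul_le_mul_of_nonneg_left hmain (le_of_lt (inv_pos.2 hb))
    _ = C := by field_simp
end
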